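/- The strong metric dimension of the generalized Petersen graph GP(8,2) equals 8, with {u_4,u_5,u_6,u_7,v_1,v_3,v_5,v_7} being a strong resolving set of minimum cardinality. -/

import Mathlib

/-!
Distances in `GP(8,2)` are read off a table, certified against the graph by checking that it
vanishes only on the diagonal, decreases by one towards some neighbour and changes by at most
one along edges. The table shows directly that the eight given vertices strongly resolve every
pair. Conversely, a mutually maximally distant pair `u, v` is strongly resolved only by `u` or
`v`, and `GP(8,2)` has eight pairwise disjoint such pairs, so every strong resolving set has at
least eight elements.
-/

/-- A vertex `w` strongly resolves vertices `u` and `v` in graph `G`: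
`u` lies on a shortest `v`–`w` path or `v` lies on a shortest `u`–`w` path,
equivalently via distances. -/
def StronglyResolves {V : Type*} (G : SimpleGraph V) (w u v : V) : Prop :=
  G.dist w u = G.dist w v + G.dist v u ∨ G.dist w v = G.dist w u + G.dist u v

/-- `S` is a strong resolving set of `G`. -/
def IsStrongResolvingSet {V : Type*} (G : SimpleGraph V) (S : Set V) : Prop :=
  ∀ u v : V, u ≠ v → ∃ w ∈ S, StronglyResolves G w u v

/-- The strong metric dimension: minimum cardinality of a strong resolving set. -/
noncomputable def sdim {V : Type*} (G : SimpleGraph V) : ℕ :=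
  sInf {m : ℕ | ∃ S : Set V, IsStrongResolvingSet G S ∧ S.ncard = m}

/-- Mutually maximally distant vertices. -/
def MutuallyMaximallyDistant {V : Type*} (G : SimpleGraph V) (u v : V) : Prop :=
  u ≠ v ∧ (∀ w : V, G.Adj u w → G.dist w v ≤ G.dist u v) ∧
    (∀ w : V, G.Adj v w → G.dist u w ≤ G.dist u v)

/-- The generalized Petersen graph `GP n k`, with outer vertices `Sum.inl i` (the `uᵢ`)
and inner vertices `Sum.inr i` (the `vᵢ`), indices in `ZMod n`. -/
def GP (n k : ℕ) : SimpleGraph (ZMod n ⊕ ZMod n) where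
  Adj x y := match x, y with
    | Sum.inl i, Sum.inl j => i ≠ j ∧ (j = i + 1 ∨ i = j + 1)
    | Sum.inl i, Sum.inr j => i = j
    | Sum.inr i, Sum.inl j => i = j
    | Sum.inr i, Sum.inr j => i ≠ j ∧ (j = i + (k : ZMod n) ∨ i = j + (k : ZMod n))
  symm := ⟨by rintro (i|i) (j|j) h <;> simp_all <;> tauto⟩
  loopless := ⟨by rintro (i|i) h <;> simp_all⟩

namespace SimpleGraph

variable {V : Type*} (G : SimpleGraph V) (d : V → V → ℕ)

theorem exists_walk_length_eq_of_exists_adj_pred (hzero : ∀ u v, d u v = 0 → u = v)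
    (hpred : ∀ u v, d u v ≠ 0 → ∃ w, G.Adj w v ∧ d u w + 1 = d u v) (u v : V) :
    ∃ p : G.Walk u v, p.length = d u v := by
  induction hn : d u v generalizing v with
  | zero => obtain rfl := hzero u v hn; exact ⟨.nil, rfl⟩
  | succ n ih =>
    obtain ⟨w, hwv, hw⟩ := hpred u v (by omega)
    obtain ⟨p, hp⟩ := ih w (by omega)
    exact ⟨p.concat hwv, by simp [hp]⟩

theorem le_walk_length_of_adj_le_add_one (hself : ∀ v, d v v = 0)
    (hadj : ∀ u v w, G.Adj u v → d u w ≤ d v w + 1) {u v : V} (p : G.Walk u v) :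
    d u v ≤ p.length := by
  induction p with
  | nil => simp [hself]
  | cons h q ih => grind [hadj _ _ _ h, Walk.length_cons]

theorem dist_eq_of_exists_adj_pred (hzero : ∀ u v, d u v = 0 ↔ u = v)
    (hpred : ∀ u v, d u v ≠ 0 → ∃ w, G.Adj w v ∧ d u w + 1 = d u v)
    (hadj : ∀ u v w, G.Adj u v → d u w ≤ d v w + 1) (u v : V) :
    G.dist u v = d u v := by
  obtain ⟨p, hp⟩ :=
    G.exists_walk_length_eq_of_exists_adj_pred d (fun u v => (hzero u v).1) hpred u v
  obtain ⟨q, hq⟩ := p.reachable.exists_walk_length_eq_dist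
  have := G.le_walk_length_of_adj_le_add_one d (fun v => (hzero v v).2 rfl) hadj q
  have := hp ▸ G.dist_le p
  omega

theorem connected_of_exists_adj_pred [Nonempty V] (hzero : ∀ u v, d u v = 0 → u = v)
    (hpred : ∀ u v, d u v ≠ 0 → ∃ w, G.Adj w v ∧ d u w + 1 = d u v) :
    G.Connected :=
  .mk fun u v => (G.exists_walk_length_eq_of_exists_adj_pred d hzero hpred u v).elim
    fun p _ => ⟨p⟩

end SimpleGraph

section StrongResolution

variable {V : Type*} {G : SimpleGraph V}

theorem MutuallyMaximallyDistant.symm {u v : V} (h : MutuallyMaximallyDistant G u v) :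
    MutuallyMaximallyDistant G v u := by
  obtain ⟨hne, hu, hv⟩ := h
  refine ⟨hne.symm, fun w hw => ?_, fun w hw => ?_⟩
  · rw [SimpleGraph.dist_comm, SimpleGraph.dist_comm (u := v)]; exact hv w hw
  · rw [SimpleGraph.dist_comm, SimpleGraph.dist_comm (u := v)]; exact hu w hw

/-- If `v` lay on a shortest `w`–`u` path with `w ≠ v`, the neighbour of `v` on that path
would be farther from `u` than `v` is. -/
theorem MutuallyMaximallyDistant.eq_of_dist_eq_add (hG : G.Connected) {u v w : V}
    (huv : MutuallyMaximallyDistant G u v) (h : G.dist w u = G.dist w v + G.dist v u) :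
    w = v := by
  by_contra hwv
  obtain ⟨p, hp⟩ := hG.exists_walk_length_eq_dist v w
  cases p with
  | nil => exact hwv rfl
  | @cons _ x _ hvx q =>
    have hxw : G.dist x w ≤ q.length := G.dist_le q
    have htri := hG.dist_triangle (u := w) (v := x) (w := u)
    have hmax := huv.2.2 x hvx
    rw [SimpleGraph.Walk.length_cons] at hp
    grind [SimpleGraph.dist_comm]

theorem MutuallyMaximallyDistant.eq_or_eq_of_stronglyResolves (hG : G.Connected) {u v w : V}
    (huv : MutuallyMaximallyDistant G u v) (h : StronglyResolves G w u v) : w = u ∨ w = v :=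
  h.elim (fun h => .inr (huv.eq_of_dist_eq_add hG h))
    (fun h => .inl (huv.symm.eq_of_dist_eq_add hG h))

theorem IsStrongResolvingSet.card_le_ncard {ι : Type*} [Finite ι] (hG : G.Connected)
    {S : Set V} (hS : IsStrongResolvingSet G S) (hfin : S.Finite) (a b : ι → V)
    (hab : ∀ i, MutuallyMaximallyDistant G (a i) (b i))
    (hdisj : Pairwise fun i j => Disjoint ({a i, b i} : Set V) {a j, b j}) :
    Nat.card ι ≤ S.ncard := by
  have hpick : ∀ i, ∃ w ∈ S, w ∈ ({a i, b i} : Set V) := fun i =>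
    (hS _ _ (hab i).1).imp fun _ ⟨hwS, hw⟩ =>
      ⟨hwS, (hab i).eq_or_eq_of_stronglyResolves hG hw⟩
  choose f hfS hf using hpick
  have hinj : Function.Injective f := fun i j hij => by
    by_contra hne
    exact Set.disjoint_left.1 (hdisj hne) (hf i) (hij ▸ hf j)
  have := hfin.to_subtype
  rw [← Nat.card_coe_set_eq]
  exact Nat.card_le_card_of_injective (fun i => ⟨f i, hfS i⟩) fun _ _ h =>
    hinj (congrArg Subtype.val h)

end StrongResolution

theorem sdim_eq_ncard_of_isStrongResolvingSet {V : Type*} {G : SimpleGraph V} {S : Set V}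
    (hS : IsStrongResolvingSet G S)
    (hmin : ∀ T, IsStrongResolvingSet G T → S.ncard ≤ T.ncard) :
    sdim G = S.ncard :=
  le_antisymm (Nat.sInf_le ⟨S, hS, rfl⟩)
    (le_csInf ⟨_, S, hS, rfl⟩ fun _ ⟨T, hT, hm⟩ => hm ▸ hmin T hT)

section GP82

open Sum

instance : DecidableRel (GP 8 2).Adj := fun x y =>
  match x, y with
  | inl i, inl j => inferInstanceAs (Decidable (i ≠ j ∧ (j = i + 1 ∨ i = j + 1)))
  | inl i, inr j => inferInstanceAs (Decidable (i = j))
  | inr i, inl j => inferInstanceAs (Decidable (i = j))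
  | inr i, inr j => inferInstanceAs (Decidable (i ≠ j ∧ (j = i + 2 ∨ i = j + 2)))

/- The rotation `i ↦ i + 1` is an automorphism, so distances depend only on the index
difference; entry `m` is the distance from `u₀` to `u_m`, from `u₀` to `v_m`, and from `v₀`
to `v_m`, respectively. -/
def gp82DistOuter : ZMod 8 → ℕ := ![0, 1, 2, 3, 4, 3, 2, 1]
def gp82DistSpoke : ZMod 8 → ℕ := ![1, 2, 2, 3, 3, 3, 2, 2]
def gp82DistInner : ZMod 8 → ℕ := ![0, 3, 1, 4, 2, 4, 1, 3]

def gp82Dist : ZMod 8 ⊕ ZMod 8 → ZMod 8 ⊕ ZMod 8 → ℕ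
  | inl i, inl j => gp82DistOuter (j - i)
  | inl i, inr j => gp82DistSpoke (j - i)
  | inr i, inl j => gp82DistSpoke (i - j)
  | inr i, inr j => gp82DistInner (j - i)

theorem gp82Dist_eq_zero_iff : ∀ x y, gp82Dist x y = 0 ↔ x = y := by decide

theorem exists_adj_gp82Dist_add_one :
    ∀ x y, gp82Dist x y ≠ 0 →
      ∃ z, (GP 8 2).Adj z y ∧ gp82Dist x z + 1 = gp82Dist x y := by
  decide

theorem gp82Dist_le_add_one_of_adj :
    ∀ x y z, (GP 8 2).Adj x y → gp82Dist x z ≤ gp82Dist y z + 1 := by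
  decide

theorem dist_gp82 (x y : ZMod 8 ⊕ ZMod 8) : (GP 8 2).dist x y = gp82Dist x y :=
  (GP 8 2).dist_eq_of_exists_adj_pred gp82Dist gp82Dist_eq_zero_iff exists_adj_gp82Dist_add_one
    gp82Dist_le_add_one_of_adj x y

theorem connected_gp82 : (GP 8 2).Connected :=
  (GP 8 2).connected_of_exists_adj_pred gp82Dist (fun x y => (gp82Dist_eq_zero_iff x y).1)
    exists_adj_gp82Dist_add_one

theorem isStrongResolvingSet_gp82 :
    IsStrongResolvingSet (GP 8 2) {inl 4, inl 5, inl 6, inl 7, inr 1, inr 3, inr 5, inr 7} := by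
  intro x y
  simp only [StronglyResolves, dist_gp82, Set.mem_insert_iff, Set.mem_singleton_iff,
    exists_eq_or_imp, exists_eq_left]
  revert x y
  decide

/- Pairs at distance 4, the diameter of `GP(8,2)`, hence mutually maximally distant. -/
def gp82PairFst : Fin 8 → ZMod 8 ⊕ ZMod 8 :=
  ![inl 0, inl 1, inl 2, inl 3, inr 0, inr 1, inr 2, inr 4]
def gp82PairSnd : Fin 8 → ZMod 8 ⊕ ZMod 8 :=
  ![inl 4, inl 5, inl 6, inl 7, inr 3, inr 6, inr 5, inr 7]

theorem mutuallyMaximallyDistant_gp82Pair :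
    ∀ i, MutuallyMaximallyDistant (GP 8 2) (gp82PairFst i) (gp82PairSnd i) := by
  simp only [MutuallyMaximallyDistant, dist_gp82]
  decide

theorem pairwise_disjoint_gp82Pair :
    Pairwise fun i j => Disjoint ({gp82PairFst i, gp82PairSnd i} : Set (ZMod 8 ⊕ ZMod 8))
      {gp82PairFst j, gp82PairSnd j} := by
  simp only [Pairwise, Set.disjoint_insert_left, Set.disjoint_singleton_left, Set.mem_insert_iff,
    Set.mem_singleton_iff]
  decide

theorem eight_le_ncard_of_isStrongResolvingSet_gp82 {S : Set (ZMod 8 ⊕ ZMod 8)}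
    (hS : IsStrongResolvingSet (GP 8 2) S) : 8 ≤ S.ncard := by
  simpa using hS.card_le_ncard connected_gp82 S.toFinite gp82PairFst gp82PairSnd
    mutuallyMaximallyDistant_gp82Pair pairwise_disjoint_gp82Pair

end GP82

/-- `sdim (GP 8 2) = 8`, and `{u₄,u₅,u₆,u₇,v₁,v₃,v₅,v₇}` is a strong resolving set of
minimum cardinality 8. -/
theorem stmt_17 :
    sdim (GP 8 2) = 8 ∧
    IsStrongResolvingSet (GP 8 2)
      {Sum.inl 4, Sum.inl 5, Sum.inl 6, Sum.inl 7, Sum.inr 1, Sum.inr 3, Sum.inr 5, Sum.inr 7} ∧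
    ({Sum.inl 4, Sum.inl 5, Sum.inl 6, Sum.inl 7, Sum.inr 1, Sum.inr 3, Sum.inr 5, Sum.inr 7} :
      Set (ZMod 8 ⊕ ZMod 8)).ncard = 8 := by
  have hcard : ({Sum.inl 4, Sum.inl 5, Sum.inl 6, Sum.inl 7, Sum.inr 1, Sum.inr 3, Sum.inr 5,
      Sum.inr 7} : Set (ZMod 8 ⊕ ZMod 8)).ncard = 8 := by
    rw [Set.ncard_eq_toFinset_card']
    rfl
  refine ⟨?_, isStrongResolvingSet_gp82, hcard⟩
  rw [sdim_eq_ncard_of_isStrongResolvingSet isStrongResolvingSet_gp82 fun _ hT =>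
    hcard.trans_le (eight_le_ncard_of_isStrongResolvingSet_gp82 hT), hcard]
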